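/- Let G be an infinite, connected, locally finite graph containing a doubly-infinite geodesic (X_n)_{n∈ℤ}, and suppose that with K_m defined as the set of vertices whose closest geodesic point is X_m, we have max{|K_m| : −n ≤ m ≤ n}/(2n+1) → 0 as n → ∞. Then for all sufficiently large N, the finite set ⋃_{m=−N}^{N} K_m separates G into (at least) two infinite components containing {X_n : n > N} and {X_n : n < −N} respectively; in particular G has at least two ends. -/
import Mathlib


open Filter

section Aux

variable {V : Type*} (G : SimpleGraph V) (X : ℤ → V) (nIdx : V → ℤ)

private lemma aux_nIdx_X
    (hgeo : ∀ n m : ℤ, G.dist (X n) (X m) = (n - m).natAbs)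
    (hclosest : ∀ (v : V) (m : ℤ), G.dist v (X (nIdx v)) ≤ G.dist v (X m))
    (i : ℤ) : nIdx (X i) = i := by
  have h0 : G.dist (X i) (X i) = 0 := by rw [hgeo]; simp
  have h1 : G.dist (X i) (X (nIdx (X i))) = 0 :=
    Nat.le_zero.mp (h0 ▸ hclosest (X i) i)
  have h2 := hgeo i (nIdx (X i))
  rw [h1] at h2
  omega

/-- Every vertex on a geodesic from `v` to its closest geodesic point lies in the same cell,
hence the cell has at least `dist + 1` elements. -/
private lemma aux_cell_card (hG : G.Connected)
    (hgeo : ∀ n m : ℤ, G.dist (X n) (X m) = (n - m).natAbs)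
    (hclosest : ∀ (v : V) (m : ℤ), G.dist v (X (nIdx v)) ≤ G.dist v (X m))
    (htie : ∀ (v : V) (m : ℤ), G.dist v (X m) = G.dist v (X (nIdx v)) → nIdx v ≤ m)
    (hfin : ∀ m : ℤ, {v : V | nIdx v = m}.Finite)
    (v : V) : G.dist v (X (nIdx v)) + 1 ≤ {u : V | nIdx u = nIdx v}.ncard := by
  classical
  set a := nIdx v with ha
  set d := G.dist v (X a) with hd
  obtain ⟨p0, hp0⟩ := hG.exists_walk_length_eq_dist v (X a)
  have hpath : p0.IsPath := p0.isPath_of_length_eq_dist hp0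
  -- every vertex of the support lies in the cell of a
  have hsupp : ∀ u ∈ p0.support, nIdx u = a := by
    intro u hu
    obtain ⟨q, r, hqr⟩ := SimpleGraph.Walk.mem_support_iff_exists_append.mp hu
    have hlen : q.length + r.length = d := by
      rw [← SimpleGraph.Walk.length_append, ← hqr, hp0]
    have hqd : G.dist v u ≤ q.length := SimpleGraph.dist_le q
    have hrd : G.dist u (X a) ≤ r.length := SimpleGraph.dist_le r
    have htri : d ≤ G.dist v u + G.dist u (X a) := hG.dist_triangle
    set b := nIdx u with hb
    have hub : G.dist u (X b) ≤ G.dist u (X a) := hclosest u a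
    have hvb : d ≤ G.dist v (X b) := hclosest v b
    have htri2 : G.dist v (X b) ≤ G.dist v u + G.dist u (X b) := hG.dist_triangle
    -- forces equalities
    have h1 : G.dist v (X b) = d := by omega
    have h2 : G.dist u (X b) = G.dist u (X a) := by omega
    have hba : b ≤ a := by
      refine htie u a ?_
      rw [← hb, h2]
    have hab : a ≤ b := by
      refine htie v b ?_
      rw [← ha, h1]
    omega
  -- support is nodup of length d+1
  have hsub : ↑p0.support.toFinset ⊆ {u : V | nIdx u = a} := by
    intro u hu
    simp only [List.coe_toFinset, Set.mem_setOf_eq] at hu ⊢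
    exact hsupp u hu
  have hcard : p0.support.toFinset.card = d + 1 := by
    rw [List.toFinset_card_of_nodup hpath.support_nodup,
      SimpleGraph.Walk.length_support, hp0]
  calc d + 1 = p0.support.toFinset.card := hcard.symm
    _ = (↑p0.support.toFinset : Set V).ncard := (Set.ncard_coe_finset _).symm
    _ ≤ {u : V | nIdx u = a}.ncard := Set.ncard_le_ncard hsub (hfin a)

end Aux

/-- Let `G` be an infinite, connected, locally finite graph with a
doubly-infinite geodesic `(X n)_{n ∈ ℤ}`, and let `K m` be the (finite) cell of vertices whose
closest geodesic point is `X m` (ties broken by minimal index).  If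
`max{|K m| : −n ≤ m ≤ n}/(2n+1) → 0`, then for all sufficiently large `N` the finite set
`⋃_{|m| ≤ N} K m` separates `{X i : i > N}` from `{X j : j < −N}`: every walk between them
meets the set; moreover both of these sets are infinite.  In particular `G` has at least two
ends. -/
theorem two_ends_of_sublinear_cells {V : Type*} (G : SimpleGraph V) (hG : G.Connected)
    [Infinite V] [∀ v : V, Fintype (G.neighborSet v)]
    (X : ℤ → V)
    (hgeo : ∀ n m : ℤ, G.dist (X n) (X m) = (n - m).natAbs)
    (nIdx : V → ℤ)
    (hclosest : ∀ (v : V) (m : ℤ), G.dist v (X (nIdx v)) ≤ G.dist v (X m))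
    (htie : ∀ (v : V) (m : ℤ), G.dist v (X m) = G.dist v (X (nIdx v)) → nIdx v ≤ m)
    (hfin : ∀ m : ℤ, {v : V | nIdx v = m}.Finite)
    (hsub : Tendsto
      (fun n : ℕ =>
        (((Finset.Icc (-(n : ℤ)) (n : ℤ)).sup' (by simp)
            (fun m => {v : V | nIdx v = m}.ncard) : ℕ) : ℝ) / (2 * n + 1))
      atTop (nhds 0)) :
    (Set.Infinite {v : V | ∃ i : ℤ, 0 < i ∧ v = X i}) ∧
      (Set.Infinite {v : V | ∃ j : ℤ, j < 0 ∧ v = X j}) ∧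
      ∃ N₀ : ℕ, ∀ N : ℕ, N₀ ≤ N →
        ({v : V | (nIdx v).natAbs ≤ N}.Finite ∧
          ∀ (i j : ℤ), (N : ℤ) < i → j < -(N : ℤ) →
            ∀ p : G.Walk (X i) (X j), ∃ w ∈ p.support, (nIdx w).natAbs ≤ N) := by
  classical
  have hXinj : ∀ i j : ℤ, X i = X j → i = j := by
    intro i j h
    have := hgeo i j
    rw [h] at this
    simp [SimpleGraph.dist_self] at this
    omega
  have hinf1 : Set.Infinite {v : V | ∃ i : ℤ, 0 < i ∧ v = X i} := by
    apply Set.infinite_of_injective_forall_mem (f := fun n : ℕ => X (n + 1))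
    · intro a b hab
      have := hXinj _ _ hab
      omega
    · intro n
      exact ⟨(n : ℤ) + 1, by omega, rfl⟩
  have hinf2 : Set.Infinite {v : V | ∃ j : ℤ, j < 0 ∧ v = X j} := by
    apply Set.infinite_of_injective_forall_mem (f := fun n : ℕ => X (-(n + 1)))
    · intro a b hab
      have := hXinj _ _ hab
      omega
    · intro n
      exact ⟨-((n : ℤ) + 1), by omega, rfl⟩
  refine ⟨hinf1, hinf2, ?_⟩
  -- notation for cell sizes and the sup function
  set f : ℕ → ℕ := fun n =>
    (Finset.Icc (-(n : ℤ)) (n : ℤ)).sup' (by simp) (fun m => {v : V | nIdx v = m}.ncard)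
    with hf
  -- eventually f n / (2n+1) < 1/4
  have hev : ∀ᶠ n : ℕ in atTop, ((f n : ℝ) / (2 * n + 1)) < 1/4 := by
    have := hsub (Iio_mem_nhds (by norm_num : (0:ℝ) < 1/4))
    simpa [hf] using this
  obtain ⟨N₀, hN₀⟩ := hev.exists_forall_of_atTop
  refine ⟨N₀, fun N hN => ?_⟩
  -- 4 * f n ≤ 2 n for n ≥ N₀
  have hf4 : ∀ n : ℕ, N₀ ≤ n → 4 * f n ≤ 2 * n := by
    intro n hn
    have h := hN₀ n hn
    have hpos : (0:ℝ) < 2 * n + 1 := by positivity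
    rw [div_lt_iff₀ hpos] at h
    have : (4 : ℝ) * (f n : ℝ) < 2 * n + 1 := by nlinarith
    have : (4 * f n : ℕ) < 2 * n + 1 := by exact_mod_cast this
    omega
  -- cell size bound
  have hcell : ∀ a : ℤ, {u : V | nIdx u = a}.ncard ≤ f a.natAbs := by
    intro a
    have hmem : a ∈ Finset.Icc (-(a.natAbs : ℤ)) (a.natAbs : ℤ) := by
      rw [Finset.mem_Icc]; omega
    exact Finset.le_sup' (fun m => {v : V | nIdx v = m}.ncard) hmem
  constructor
  · -- finiteness
    have hsubset : {v : V | (nIdx v).natAbs ≤ N} ⊆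
        ⋃ m ∈ Finset.Icc (-(N : ℤ)) (N : ℤ), {v : V | nIdx v = m} := by
      intro v hv
      simp only [Set.mem_setOf_eq] at hv
      simp only [Set.mem_iUnion, Finset.mem_Icc, Set.mem_setOf_eq]
      exact ⟨nIdx v, ⟨by omega, by omega⟩, rfl⟩
    exact (Set.Finite.biUnion (Finset.Icc _ _).finite_toSet
      (fun m _ => hfin m)).subset hsubset
  · -- separation
    intro i j hi hj p
    by_contra hcon
    push_neg at hcon
    -- no adjacent pair can jump across
    have hedge : ∀ w w' : V, G.Adj w w' → (N : ℤ) < nIdx w → nIdx w' < -(N : ℤ) → False := by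
      intro w w' hadj hw hw'
      have hA := aux_cell_card G X nIdx hG hgeo hclosest htie hfin w
      have hB := aux_cell_card G X nIdx hG hgeo hclosest htie hfin w'
      have hAf := hcell (nIdx w)
      have hBf := hcell (nIdx w')
      have h4a : 4 * f (nIdx w).natAbs ≤ 2 * (nIdx w).natAbs := hf4 _ (by omega)
      have h4b : 4 * f (nIdx w').natAbs ≤ 2 * (nIdx w').natAbs := hf4 _ (by omega)
      have hdab : G.dist (X (nIdx w)) (X (nIdx w')) = (nIdx w - nIdx w').natAbs :=
        hgeo (nIdx w) (nIdx w')
      have hd1 : G.dist w w' = 1 := SimpleGraph.dist_eq_one_iff_adj.mpr hadj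
      have htri1 : G.dist (X (nIdx w)) (X (nIdx w')) ≤
          G.dist (X (nIdx w)) w + G.dist w (X (nIdx w')) := hG.dist_triangle
      have htri2 : G.dist w (X (nIdx w')) ≤ G.dist w w' + G.dist w' (X (nIdx w')) :=
        hG.dist_triangle
      have hcomm : G.dist (X (nIdx w)) w = G.dist w (X (nIdx w)) := SimpleGraph.dist_comm
      have hnat : (nIdx w - nIdx w').natAbs = (nIdx w).natAbs + (nIdx w').natAbs := by omega
      omega
    -- walk induction: all support has |nIdx| > N, endpoints cross
    have key : ∀ (u v : V) (q : G.Walk u v), (N : ℤ) < nIdx u → nIdx v < -(N : ℤ) →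
        ∃ w ∈ q.support, (nIdx w).natAbs ≤ N := by
      intro u v q
      induction q with
      | nil => intro hu hv; omega
      | @cons u u' v h q ih =>
        intro hu hv
        by_cases h1 : (nIdx u').natAbs ≤ N
        · exact ⟨u', by simp [SimpleGraph.Walk.support_cons], h1⟩
        · by_cases h2 : (N : ℤ) < nIdx u'
          · obtain ⟨w, hw, hw2⟩ := ih h2 hv
            exact ⟨w, by simp [SimpleGraph.Walk.support_cons, hw], hw2⟩
          · exact absurd (hedge u u' h hu (by omega)) (by simp)
    obtain ⟨w, hw, hw2⟩ := key (X i) (X j) p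
      (by rw [aux_nIdx_X G X nIdx hgeo hclosest]; omega)
      (by rw [aux_nIdx_X G X nIdx hgeo hclosest]; omega)
    exact absurd hw2 (by simpa using hcon w hw)
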